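/- Let K be a C¹ solution of the integral equation K(x,y) + F(x,y) + ∫₀ˣ K(x,t)·F(t,y) dt = 0 on the triangle {(x,y) : 0 ≤ y ≤ x ≤ π}, define ψ_n(x) := φ_n(x) + ∫₀ˣ K(x,t)·φ_n(t) dt, and assume the series Σ_n c_n·ψ_n(x)·φ_n(t)ᵀ converges uniformly together with its term-by-term derivative in x. Then for every l: (i) ψ_l(π) = φ_l(π) / (1 + c_l·‖φ_l‖²_{L²}); and (ii) ℬ·ψ_l'(π) + 𝒜̃·ψ_l(π) = 0, where 𝒜̃ := 𝒜 − ℬ·K(π,π). -/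

import Mathlib

/-!
Put `S(x, y) = ∑ cₙ ψₙ(x) φₙ(y)ᵀ`. Inserting `ψₙ = φₙ + ∫₀ˣ K(x,t) φₙ(t) dt` and summing term by
term gives `S(x, y) = F(x, y) + ∫₀ˣ K(x,t) F(t,y) dt`, which is `-K(x, y)` on the triangle
`0 ≤ y ≤ x ≤ π` by the integral equation. Multiplying the row `x = π` by `φₗ` and integrating, the
orthogonality of the `φₙ` kills every term but one:
`∫₀^π K(π,t) φₗ(t) dt = -cₗ ‖φₗ‖² ψₗ(π)`, which is (i) since `ψₗ(π) = φₗ(π) + ∫₀^π K(π,t) φₗ(t) dt`.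
The uniformly convergent derivative series identifies `∂ₓK(π, t)` with `-∂ₓS(π, t)` for `t < π`,
so the same computation applied to the Leibniz formula
`ψₗ'(π) = φₗ'(π) + K(π,π) φₗ(π) + ∫₀^π ∂ₓK(π,t) φₗ(t) dt` gives
`(1 + cₗ ‖φₗ‖²) ψₗ'(π) = φₗ'(π) + K(π,π) φₗ(π)`; (ii) is then the boundary condition of `φₗ` at `π`.
-/

open Matrix MeasureTheory Set Filter Topology intervalIntegral Function
open scoped Interval

attribute [local instance] Matrix.normedAddCommGroup Matrix.normedSpace

section Analysis

variable {E F G : Type*} [NormedAddCommGroup E] [NormedSpace ℝ E] [NormedAddCommGroup F]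
  [NormedSpace ℝ F] [NormedAddCommGroup G] [NormedSpace ℝ G]

theorem integral_integral_swap_triangle_of_le {f : ℝ → ℝ → E} (hf : Continuous (uncurry f))
    {a b : ℝ} (hab : a ≤ b) :
    ∫ u in a..b, ∫ t in a..u, f u t = ∫ t in a..b, ∫ u in t..b, f u t := by
  set g := {p : ℝ × ℝ | p.2 < p.1}.indicator (uncurry f)
  have hg : Integrable (uncurry fun u t => g (u, t))
      ((volume.restrict (Ioc a b)).prod (volume.restrict (Ioc a b))) := by
    rw [Measure.prod_restrict, ← Measure.volume_eq_prod]
    refine ((hf.continuousOn.integrableOn_compact (isCompact_Icc.prod isCompact_Icc)).mono_set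
      (prod_mono Ioc_subset_Icc_self Ioc_subset_Icc_self)).indicator ?_
    exact measurableSet_lt measurable_snd measurable_fst
  have hu : ∀ u ∈ Ioc a b, ∫ t in a..u, f u t = ∫ t in Ioc a b, g (u, t) := fun u hu => by
    have hslice : (fun t => g (u, t)) = (Iio u).indicator (f u) := by
      ext t; simp [g, indicator_apply]
    have : Ioc a b ∩ Iio u = Ioo a u := by
      ext t
      simp only [mem_inter_iff, mem_Ioc, mem_Iio, mem_Ioo]
      exact ⟨fun h => ⟨h.1.1, h.2⟩, fun h => ⟨⟨h.1, h.2.le.trans hu.2⟩, h.2⟩⟩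
    rw [hslice, setIntegral_indicator measurableSet_Iio, this, integral_of_le hu.1.le,
      integral_Ioc_eq_integral_Ioo]
  have ht : ∀ t ∈ Ioc a b, ∫ u in t..b, f u t = ∫ u in Ioc a b, g (u, t) := fun t ht => by
    have hslice : (fun u => g (u, t)) = (Ioi t).indicator (f · t) := by
      ext u; simp [g, indicator_apply]
    rw [hslice, setIntegral_indicator measurableSet_Ioi, Ioc_inter_Ioi, max_eq_right ht.1.le,
      integral_of_le ht.2]
  rw [integral_of_le hab, integral_of_le hab, setIntegral_congr_fun measurableSet_Ioc hu,
    setIntegral_congr_fun measurableSet_Ioc ht]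
  exact integral_integral_swap hg

theorem integral_integral_swap_triangle {f : ℝ → ℝ → E} (hf : Continuous (uncurry f)) (a b : ℝ) :
    ∫ u in a..b, ∫ t in a..u, f u t = ∫ t in a..b, ∫ u in t..b, f u t := by
  rcases le_total a b with hab | hba
  · exact integral_integral_swap_triangle_of_le hf hab
  · have := integral_integral_swap_triangle_of_le (f := fun t u => f u t)
      (hf.comp continuous_swap) hba
    simp only [integral_symm _ a, integral_symm b, intervalIntegral.integral_neg, neg_neg]
    exact this.symm

theorem hasDerivAt_integral_of_hasDerivAt_fst [CompleteSpace E] {f f' : ℝ → ℝ → E}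
    (hf : Continuous (uncurry f)) (hf' : Continuous (uncurry f'))
    (hderiv : ∀ x t, HasDerivAt (f · t) (f' x t) x) (a x : ℝ) :
    HasDerivAt (fun x => ∫ t in a..x, f x t) (f x x + ∫ t in a..x, f' x t) x := by
  have hdiag : Continuous fun u => f u u := hf.comp (continuous_id.prodMk continuous_id)
  have hinner : Continuous fun u => ∫ t in a..u, f' u t :=
    continuous_parametric_intervalIntegral_of_continuous hf' continuous_id
  have hslice : ∀ u, Continuous (f u) := fun u => hf.comp (Continuous.prodMk_right u)
  -- Fubini on the triangle `a ≤ t ≤ u ≤ x` and the FTC in `u` for `∂ₓf(u, t)`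
  have key : ∀ x, ∫ t in a..x, f x t = ∫ u in a..x, (f u u + ∫ t in a..u, f' u t) := fun x => by
    have hftc : ∀ t, ∫ u in t..x, f' u t = f x t - f t t := fun t =>
      integral_eq_sub_of_hasDerivAt (fun u _ => hderiv u t)
        ((hf'.comp (continuous_id.prodMk continuous_const)).intervalIntegrable _ _)
    rw [integral_add (hdiag.intervalIntegrable _ _) (hinner.intervalIntegrable _ _),
      integral_integral_swap_triangle hf', integral_congr fun t _ => hftc t,
      integral_sub ((hslice x).intervalIntegrable _ _) (hdiag.intervalIntegrable _ _)]
    abel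
  simp only [key]
  exact ((hdiag.add hinner).integral_hasStrictDerivAt a x).hasDerivAt

theorem ContDiff.hasDerivAt_partial_fst {f : ℝ → ℝ → E} (hf : ContDiff ℝ 1 (uncurry f))
    (x t : ℝ) : HasDerivAt (f · t) (deriv (f · t) x) x :=
  ((hf.differentiable one_ne_zero).comp (differentiable_id.prodMk (differentiable_const t))
    x).hasDerivAt

theorem ContDiff.continuous_deriv_partial_fst {f : ℝ → ℝ → E} (hf : ContDiff ℝ 1 (uncurry f)) :
    Continuous (uncurry fun x t => deriv (f · t) x) := by
  have h : ∀ x t, deriv (f · t) x = fderiv ℝ (uncurry f) (x, t) (1, 0) := fun x t => by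
    have := ((hf.differentiable one_ne_zero) (x, t)).hasFDerivAt.comp_hasDerivAt x
      ((hasDerivAt_id x).prodMk (hasDerivAt_const x t))
    exact this.deriv
  simp only [uncurry_def, h]
  exact (hf.continuous_fderiv one_ne_zero).clm_apply continuous_const

theorem TendstoUniformlyOn.bilinear_left {ι X : Type*} {l : Filter ι} {s : Set X}
    (L : E →L[ℝ] F →L[ℝ] G) {g : X → E} (hg : ∃ C, ∀ x ∈ s, ‖g x‖ ≤ C)
    {u : ι → X → F} {f : X → F} (h : TendstoUniformlyOn u f l s) :
    TendstoUniformlyOn (fun i x => L (g x) (u i x)) (fun x => L (g x) (f x)) l s := by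
  obtain ⟨C, hC⟩ := hg
  rw [Metric.tendstoUniformlyOn_iff] at h ⊢
  intro ε hε
  have hM : 0 < ‖L‖ * max C 0 + 1 := by positivity
  filter_upwards [h (ε / (‖L‖ * max C 0 + 1)) (by positivity)] with i hi x hx
  rw [dist_eq_norm, ← map_sub]
  calc ‖L (g x) (f x - u i x)‖ ≤ ‖L‖ * ‖g x‖ * ‖f x - u i x‖ := L.le_opNorm₂ _ _
    _ ≤ ‖L‖ * max C 0 * (ε / (‖L‖ * max C 0 + 1)) := by
      gcongr
      · exact (hC x hx).trans (le_max_left _ _)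
      · rw [← dist_eq_norm]; exact (hi x hx).le
    _ < ε := by
      rw [mul_div_assoc', div_lt_iff₀ hM]; nlinarith

theorem hasSum_intervalIntegral_of_tendstoUniformlyOn {ι : Type*} [Countable ι]
    {f : ι → ℝ → E} {S : ℝ → E} {a b : ℝ} (hf : ∀ n, ContinuousOn (f n) [[a, b]])
    (h : TendstoUniformlyOn (fun s x => ∑ n ∈ s, f n x) S atTop [[a, b]]) :
    HasSum (fun n => ∫ x in a..b, f n x) (∫ x in a..b, S x) := by
  have hint : ∀ n, IntervalIntegrable (f n) volume a b := fun n => (hf n).intervalIntegrable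
  have := h.tendsto_intervalIntegral_of_continuousOn (μ := volume)
    (Eventually.of_forall fun s => continuousOn_finsetSum s fun n _ => hf n)
  simp only [intervalIntegral.integral_finsetSum fun n _ => hint n] at this
  exact this

theorem hasSum_intervalIntegral_bilinear_of_tendstoUniformlyOn {ι : Type*}
    [Countable ι] (L : E →L[ℝ] F →L[ℝ] G) {g : ℝ → E} {f : ι → ℝ → F} {S : ℝ → F} {a b : ℝ}
    (hg : ContinuousOn g [[a, b]]) (hf : ∀ n, ContinuousOn (f n) [[a, b]])
    (h : TendstoUniformlyOn (fun s x => ∑ n ∈ s, f n x) S atTop [[a, b]]) :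
    HasSum (fun n => ∫ x in a..b, L (g x) (f n x)) (∫ x in a..b, L (g x) (S x)) := by
  refine hasSum_intervalIntegral_of_tendstoUniformlyOn
    (fun n => L.continuous₂.comp_continuousOn (hg.prodMk (hf n))) ?_
  simpa only [map_sum] using
    h.bilinear_left L (isCompact_uIcc.exists_bound_of_continuousOn hg)

theorem eqOn_deriv_of_tendstoUniformlyOn {ι : Type*} {l : Filter ι} [l.NeBot]
    {u u' : ι → ℝ → E} {f g : ℝ → E} {a b : ℝ} (hab : a < b)
    (hu : ∀ i, ∀ x ∈ Ioo a b, HasDerivAt (u i) (u' i x) x)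
    (hu' : ∀ i, ContinuousOn (u' i) (Icc a b))
    (huf : ∀ x ∈ Ioo a b, Tendsto (fun i => u i x) l (𝓝 (f x)))
    (hu'g : TendstoUniformlyOn u' g l (Icc a b)) (hf : ContinuousOn (deriv f) (Icc a b)) :
    EqOn (deriv f) g (Icc a b) := by
  have hinterior : EqOn (deriv f) g (Ioo a b) := fun x hx =>
    (hasDerivAt_of_tendstoUniformlyOn isOpen_Ioo (hu'g.mono Ioo_subset_Icc_self)
      (Eventually.of_forall hu) huf hx).deriv
  exact hinterior.of_subset_closure hf (hu'g.continuousOn (Frequently.of_forall hu'))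
    Ioo_subset_Icc_self (closure_Ioo hab.ne).superset

end Analysis

section Matrix

variable {m n : Type*} [Fintype m] [Fintype n]

theorem integral_mulVec_eq_of_orthogonal {φ : ℕ → ℝ → n → ℝ} {c : ℕ → ℝ} {v : ℕ → m → ℝ}
    {G : ℝ → Matrix m n ℝ} {a b : ℝ} {l : ℕ} (hφ : ∀ k, Continuous (φ k))
    (horth : ∀ k, k ≠ l → ∫ x in a..b, φ k x ⬝ᵥ φ l x = 0)
    (h : TendstoUniformlyOn (fun s x => ∑ k ∈ s, c k • vecMulVec (v k) (φ k x)) G atTop [[a, b]]) :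
    ∫ x in a..b, G x *ᵥ φ l x = (c l * ∫ x in a..b, φ l x ⬝ᵥ φ l x) • v l := by
  have hsum := hasSum_intervalIntegral_bilinear_of_tendstoUniformlyOn
    (mulVecBilin ℝ ℝ).flip.toContinuousBilinearMap (hφ l).continuousOn
    (fun k => ((continuous_const.matrix_vecMulVec (hφ k)).const_smul (c k)).continuousOn) h
  have hterm : ∀ k, ∫ x in a..b, (c k • vecMulVec (v k) (φ k x)) *ᵥ φ l x
      = (c k * ∫ x in a..b, φ k x ⬝ᵥ φ l x) • v k := fun k => by
    simp only [smul_mulVec, vecMulVec_mulVec, op_smul_eq_smul, smul_smul,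
      intervalIntegral.integral_smul_const, intervalIntegral.integral_const_mul]
  refine hsum.unique ?_
  simp only [LinearMap.toContinuousBilinearMap_apply, LinearMap.flip_apply, mulVecBilin_apply,
    hterm]
  exact hasSum_single l fun k hk => by simp [horth k hk]

theorem HasDerivAt.mulVec_const {A : ℝ → Matrix m n ℝ} {A' : Matrix m n ℝ} {x : ℝ}
    (h : HasDerivAt A A' x) (v : n → ℝ) : HasDerivAt (fun x => A x *ᵥ v) (A' *ᵥ v) x :=
  ((mulVecBilin ℝ ℝ).flip v).toContinuousLinearMap.hasFDerivAt.comp_hasDerivAt (f := A) x h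

theorem HasDerivAt.vecMulVec_const {u : ℝ → m → ℝ} {u' : m → ℝ} {x : ℝ}
    (h : HasDerivAt u u' x) (w : n → ℝ) :
    HasDerivAt (fun x => vecMulVec (u x) w) (vecMulVec u' w) x :=
  ((vecMulVecBilin ℝ ℝ).flip w).toContinuousLinearMap.hasFDerivAt.comp_hasDerivAt (f := u) x h

theorem hasDerivAt_integral_mulVec {K : ℝ → ℝ → Matrix m n ℝ} (hK : ContDiff ℝ 1 (uncurry K))
    {φ : ℝ → n → ℝ} (hφ : Continuous φ) (x : ℝ) :
    HasDerivAt (fun x => ∫ t in (0 : ℝ)..x, K x t *ᵥ φ t)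
      (K x x *ᵥ φ x + ∫ t in (0 : ℝ)..x, deriv (K · t) x *ᵥ φ t) x :=
  hasDerivAt_integral_of_hasDerivAt_fst (f := fun x t => K x t *ᵥ φ t)
    (f' := fun x t => deriv (K · t) x *ᵥ φ t)
    (hK.continuous.matrix_mulVec (hφ.comp continuous_snd))
    (hK.continuous_deriv_partial_fst.matrix_mulVec (hφ.comp continuous_snd))
    (fun x t => (hK.hasDerivAt_partial_fst x t).mulVec_const (φ t)) 0 x

theorem hasDerivAt_of_eq_add_integral_mulVec {K : ℝ → ℝ → Matrix n n ℝ}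
    (hK : ContDiff ℝ 1 (uncurry K)) {f g : ℝ → n → ℝ}
    (hf : ContDiff ℝ 1 f) (hg : ∀ x, g x = f x + ∫ t in (0 : ℝ)..x, K x t *ᵥ f t) (x : ℝ) :
    HasDerivAt g (deriv f x + (K x x *ᵥ f x + ∫ t in (0 : ℝ)..x, deriv (K · t) x *ᵥ f t)) x := by
  rw [funext hg]
  exact ((hf.differentiable one_ne_zero) x).hasDerivAt.add
    (hasDerivAt_integral_mulVec hK hf.continuous x)

theorem contDiff_of_eq_add_integral_mulVec {K : ℝ → ℝ → Matrix n n ℝ}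
    (hK : ContDiff ℝ 1 (uncurry K)) {f g : ℝ → n → ℝ}
    (hf : ContDiff ℝ 1 f) (hg : ∀ x, g x = f x + ∫ t in (0 : ℝ)..x, K x t *ᵥ f t) :
    ContDiff ℝ 1 g := by
  have hderiv := hasDerivAt_of_eq_add_integral_mulVec hK hf hg
  refine contDiff_one_iff_deriv.mpr ⟨fun x => (hderiv x).differentiableAt, ?_⟩
  rw [funext fun x => (hderiv x).deriv]
  exact (hf.continuous_deriv le_rfl).add
    ((hK.continuous.comp (continuous_id.prodMk continuous_id)).matrix_mulVec hf.continuous |>.add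
      (continuous_parametric_intervalIntegral_of_continuous
        (hK.continuous_deriv_partial_fst.matrix_mulVec (hf.continuous.comp continuous_snd))
        continuous_id))

end Matrix

section Transform

variable {n : Type*} [Fintype n] {φ ψ : ℕ → ℝ → n → ℝ} {c : ℕ → ℝ}
  {F K : ℝ → ℝ → Matrix n n ℝ} {b : ℝ}

theorem hasSum_smul_vecMulVec_eq_neg_kernel (hφ : ∀ k, Continuous (φ k))
    (hK : Continuous (uncurry K))
    (hFunif : TendstoUniformlyOn
      (fun (s : Finset ℕ) (p : ℝ × ℝ) => ∑ k ∈ s, c k • vecMulVec (φ k p.1) (φ k p.2))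
      (fun p => F p.1 p.2) atTop (Icc 0 b ×ˢ Icc 0 b))
    (hKIE : ∀ x y : ℝ, 0 ≤ y → y ≤ x → x ≤ b →
      K x y + F x y + (∫ t in (0 : ℝ)..x, K x t * F t y) = 0)
    (hψ : ∀ k x, ψ k x = φ k x + ∫ t in (0 : ℝ)..x, K x t *ᵥ φ k t)
    {x y : ℝ} (hy : 0 ≤ y) (hyx : y ≤ x) (hxb : x ≤ b) :
    HasSum (fun k => c k • vecMulVec (ψ k x) (φ k y)) (-K x y) := by
  have hx : 0 ≤ x := hy.trans hyx
  have hKx : Continuous (K x) := hK.comp (Continuous.prodMk_right x)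
  have hF : HasSum (fun k => c k • vecMulVec (φ k x) (φ k y)) (F x y) :=
    hFunif.tendsto_at (x := (x, y)) ⟨⟨hx, hxb⟩, hy, hyx.trans hxb⟩
  have hFy : TendstoUniformlyOn (fun s t => ∑ k ∈ s, c k • vecMulVec (φ k t) (φ k y)) (F · y)
      atTop [[0, x]] := by
    refine (hFunif.comp (·, y)).mono fun t ht => ?_
    rw [uIcc_of_le hx] at ht
    exact ⟨⟨ht.1, ht.2.trans hxb⟩, hy, hyx.trans hxb⟩
  have hKF : HasSum (fun k => ∫ t in (0 : ℝ)..x, K x t * (c k • vecMulVec (φ k t) (φ k y)))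
      (∫ t in (0 : ℝ)..x, K x t * F t y) :=
    hasSum_intervalIntegral_bilinear_of_tendstoUniformlyOn
      (LinearMap.mul ℝ (Matrix n n ℝ)).toContinuousBilinearMap hKx.continuousOn
      (fun k => (((hφ k).matrix_vecMulVec continuous_const).const_smul (c k)).continuousOn) hFy
  have hterm : ∀ k, c k • vecMulVec (ψ k x) (φ k y) = c k • vecMulVec (φ k x) (φ k y)
      + ∫ t in (0 : ℝ)..x, K x t * (c k • vecMulVec (φ k t) (φ k y)) := fun k => by
    have : ∫ t in (0 : ℝ)..x, vecMulVec (K x t *ᵥ φ k t) (φ k y)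
        = vecMulVec (∫ t in (0 : ℝ)..x, K x t *ᵥ φ k t) (φ k y) :=
      ((vecMulVecBilin ℝ ℝ).flip (φ k y)).toContinuousLinearMap.intervalIntegral_comp_comm
        ((hKx.matrix_mulVec (hφ k)).intervalIntegrable 0 x)
    simp only [hψ, add_vecMulVec, smul_add, ← this, Matrix.mul_smul, mul_vecMulVec,
      intervalIntegral.integral_smul]
  have hKIE' : K x y + (F x y + ∫ t in (0 : ℝ)..x, K x t * F t y) = 0 := by
    rw [← add_assoc]; exact hKIE x y hy hyx hxb
  rw [funext hterm, neg_eq_of_add_eq_zero_right hKIE']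
  exact hF.add hKF

theorem deriv_kernel_eq_neg_of_tendstoUniformlyOn (hK : ContDiff ℝ 1 (uncurry K))
    (hψ : ∀ k, ContDiff ℝ 1 (ψ k))
    (hseries : ∀ x y : ℝ, 0 ≤ y → y ≤ x → x ≤ b →
      HasSum (fun k => c k • vecMulVec (ψ k x) (φ k y)) (-K x y))
    {S' : ℝ × ℝ → Matrix n n ℝ}
    (hS' : TendstoUniformlyOn
      (fun (s : Finset ℕ) (p : ℝ × ℝ) => ∑ k ∈ s, c k • vecMulVec (deriv (ψ k) p.1) (φ k p.2))
      S' atTop (Icc 0 b ×ˢ Icc 0 b))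
    {y : ℝ} (hy : 0 ≤ y) (hyb : y < b) :
    deriv (K · y) b = -S' (b, y) := by
  have hKy : Continuous fun x => deriv (K · y) x :=
    hK.continuous_deriv_partial_fst.comp (continuous_id.prodMk continuous_const)
  have key := eqOn_deriv_of_tendstoUniformlyOn (f := fun x => -K x y) (g := fun x => S' (x, y))
    (u := fun s x => ∑ k ∈ s, c k • vecMulVec (ψ k x) (φ k y))
    (u' := fun s x => ∑ k ∈ s, c k • vecMulVec (deriv (ψ k) x) (φ k y)) hyb
    (fun s x _ => HasDerivAt.fun_sum fun k _ =>
      ((((hψ k).differentiable one_ne_zero) x).hasDerivAt.vecMulVec_const (φ k y)).const_smul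
        (c k))
    (fun s => (continuous_finsetSum s fun k _ =>
      (((hψ k).continuous_deriv le_rfl).matrix_vecMulVec continuous_const).const_smul
        (c k)).continuousOn)
    (fun x hx => hseries x y hy hx.1.le hx.2.le)
    ((hS'.comp (·, y)).mono fun x hx => ⟨⟨hy.trans hx.1, hx.2⟩, hy, hyb.le⟩)
    (by rw [deriv.fun_neg']; exact hKy.neg.continuousOn) ⟨hyb.le, le_rfl⟩
  simp only [deriv.fun_neg] at key
  exact neg_eq_iff_eq_neg.mp key

theorem smul_transform_eq_at_endpoint (hφ : ∀ k, Continuous (φ k))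
    (hψ : ∀ k x, ψ k x = φ k x + ∫ t in (0 : ℝ)..x, K x t *ᵥ φ k t)
    (hseries : ∀ x y : ℝ, 0 ≤ y → y ≤ x → x ≤ b →
      HasSum (fun k => c k • vecMulVec (ψ k x) (φ k y)) (-K x y))
    {S : ℝ × ℝ → Matrix n n ℝ}
    (hS : TendstoUniformlyOn
      (fun (s : Finset ℕ) (p : ℝ × ℝ) => ∑ k ∈ s, c k • vecMulVec (ψ k p.1) (φ k p.2))
      S atTop (Icc 0 b ×ˢ Icc 0 b))
    {l : ℕ} (horth : ∀ k, k ≠ l → ∫ t in (0 : ℝ)..b, φ k t ⬝ᵥ φ l t = 0) (hb : 0 ≤ b) :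
    (1 + c l * ∫ t in (0 : ℝ)..b, φ l t ⬝ᵥ φ l t) • ψ l b = φ l b := by
  have hSK : ∀ t ∈ [[0, b]], S (b, t) *ᵥ φ l t = -(K b t *ᵥ φ l t) := fun t ht => by
    rw [uIcc_of_le hb] at ht
    have hSsum : HasSum (fun k => c k • vecMulVec (ψ k b) (φ k t)) (S (b, t)) :=
      hS.tendsto_at (x := (b, t)) ⟨⟨hb, le_rfl⟩, ht⟩
    rw [hSsum.unique (hseries b t ht.1 ht.2 le_rfl), neg_mulVec]
  have hproj : ∫ t in (0 : ℝ)..b, S (b, t) *ᵥ φ l t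
      = (c l * ∫ t in (0 : ℝ)..b, φ l t ⬝ᵥ φ l t) • ψ l b :=
    integral_mulVec_eq_of_orthogonal (v := fun k => ψ k b) (G := fun t => S (b, t)) hφ horth
      ((hS.comp (b, ·)).mono fun t ht => by
        rw [uIcc_of_le hb] at ht
        exact ⟨⟨hb, le_rfl⟩, ht⟩)
  rw [add_smul, one_smul, ← hproj, integral_congr hSK, intervalIntegral.integral_neg, hψ,
    add_neg_cancel_right]

theorem smul_deriv_transform_eq_at_endpoint (hφ : ∀ k, ContDiff ℝ 1 (φ k))
    (hK : ContDiff ℝ 1 (uncurry K))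
    (hψ : ∀ k x, ψ k x = φ k x + ∫ t in (0 : ℝ)..x, K x t *ᵥ φ k t)
    (hseries : ∀ x y : ℝ, 0 ≤ y → y ≤ x → x ≤ b →
      HasSum (fun k => c k • vecMulVec (ψ k x) (φ k y)) (-K x y))
    {S' : ℝ × ℝ → Matrix n n ℝ}
    (hS' : TendstoUniformlyOn
      (fun (s : Finset ℕ) (p : ℝ × ℝ) => ∑ k ∈ s, c k • vecMulVec (deriv (ψ k) p.1) (φ k p.2))
      S' atTop (Icc 0 b ×ˢ Icc 0 b))
    {l : ℕ} (horth : ∀ k, k ≠ l → ∫ t in (0 : ℝ)..b, φ k t ⬝ᵥ φ l t = 0) (hb : 0 < b) :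
    (1 + c l * ∫ t in (0 : ℝ)..b, φ l t ⬝ᵥ φ l t) • deriv (ψ l) b
      = deriv (φ l) b + K b b *ᵥ φ l b := by
  have hψC : ∀ k, ContDiff ℝ 1 (ψ k) := fun k =>
    contDiff_of_eq_add_integral_mulVec hK (hφ k) (hψ k)
  -- `K = -S` only on the closed triangle, so `∂ₓK(b, t) = -S'(b, t)` is known just for `t < b`
  have hS'K : ∀ᵐ t, t ∈ Ι 0 b → deriv (K · t) b *ᵥ φ l t = -(S' (b, t) *ᵥ φ l t) := by
    filter_upwards [volume.ae_ne b] with t htb ht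
    rw [uIoc_of_le hb.le] at ht
    rw [deriv_kernel_eq_neg_of_tendstoUniformlyOn hK hψC hseries hS' ht.1.le
      (lt_of_le_of_ne ht.2 htb), neg_mulVec]
  have hproj : ∫ t in (0 : ℝ)..b, S' (b, t) *ᵥ φ l t
      = (c l * ∫ t in (0 : ℝ)..b, φ l t ⬝ᵥ φ l t) • deriv (ψ l) b :=
    integral_mulVec_eq_of_orthogonal (v := fun k => deriv (ψ k) b) (G := fun t => S' (b, t))
      (fun k => (hφ k).continuous) horth ((hS'.comp (b, ·)).mono fun t ht => by
        rw [uIcc_of_le hb.le] at ht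
        exact ⟨⟨hb.le, le_rfl⟩, ht⟩)
  rw [add_smul, one_smul, ← hproj,
    (hasDerivAt_of_eq_add_integral_mulVec hK (hφ l) (hψ l) b).deriv, integral_congr_ae hS'K,
    intervalIntegral.integral_neg, ← add_assoc, neg_add_cancel_right]

end Transform

theorem boundary_condition_at_pi_general
    (N : ℕ)
    (𝒜 ℬ : Matrix (Fin N) (Fin N) ℝ)
    -- `(φ n)` is an L²-orthogonal, complete system of eigenfunctions with eigenvalues `ev n`
    (φ : ℕ → ℝ → (Fin N → ℝ)) (c : ℕ → ℝ)
    (hφC : ∀ n, ContDiff ℝ 2 (φ n))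
    (hφbcπ : ∀ n, ℬ *ᵥ deriv (φ n) Real.pi + 𝒜 *ᵥ φ n Real.pi = 0)
    (horth : ∀ m n : ℕ, m ≠ n → ∫ x in (0:ℝ)..Real.pi, φ m x ⬝ᵥ φ n x = 0)
    (hc : ∀ n, 0 < 1 + c n * ∫ x in (0:ℝ)..Real.pi, φ n x ⬝ᵥ φ n x)
    -- `F(x,y) = ∑ n, c n • φ n x ⬝ (φ n y)ᵀ`, converging uniformly, with `F` of class C²
    (F : ℝ → ℝ → Matrix (Fin N) (Fin N) ℝ)
    (hFunif : TendstoUniformlyOn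
      (fun (s : Finset ℕ) (p : ℝ × ℝ) => ∑ n ∈ s, c n • Matrix.vecMulVec (φ n p.1) (φ n p.2))
      (fun p => F p.1 p.2) Filter.atTop (Set.Icc 0 Real.pi ×ˢ Set.Icc 0 Real.pi))
    -- `K` is a C¹ solution of the integral equation on the triangle
    (K : ℝ → ℝ → Matrix (Fin N) (Fin N) ℝ)
    (hKC : ContDiff ℝ 1 (Function.uncurry K))
    (hKIE : ∀ x y : ℝ, 0 ≤ y → y ≤ x → x ≤ Real.pi →
      K x y + F x y + (∫ t in (0:ℝ)..x, K x t * F t y) = 0)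
    (ψ : ℕ → ℝ → (Fin N → ℝ))
    (hψ : ∀ n x, ψ n x = φ n x + ∫ t in (0:ℝ)..x, K x t *ᵥ φ n t)
    -- uniform convergence of `∑ n, c n • ψ n x ⬝ (φ n t)ᵀ` and its term-by-term
    -- derivative in `x`
    (S S' : ℝ × ℝ → Matrix (Fin N) (Fin N) ℝ)
    (hS : TendstoUniformlyOn
      (fun (s : Finset ℕ) (p : ℝ × ℝ) => ∑ n ∈ s, c n • Matrix.vecMulVec (ψ n p.1) (φ n p.2))
      S Filter.atTop (Set.Icc 0 Real.pi ×ˢ Set.Icc 0 Real.pi))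
    (hS' : TendstoUniformlyOn
      (fun (s : Finset ℕ) (p : ℝ × ℝ) =>
        ∑ n ∈ s, c n • Matrix.vecMulVec (deriv (ψ n) p.1) (φ n p.2))
      S' Filter.atTop (Set.Icc 0 Real.pi ×ˢ Set.Icc 0 Real.pi)) :
    ∀ l : ℕ,
      ψ l Real.pi
        = (1 + c l * ∫ t in (0:ℝ)..Real.pi, φ l t ⬝ᵥ φ l t)⁻¹ • φ l Real.pi ∧
      ℬ *ᵥ deriv (ψ l) Real.pi
        + (𝒜 - ℬ * K Real.pi Real.pi) *ᵥ ψ l Real.pi = 0 := by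
  intro l
  have hφ : ∀ n, ContDiff ℝ 1 (φ n) := fun n => (hφC n).of_le one_le_two
  have hseries := fun x y => hasSum_smul_vecMulVec_eq_neg_kernel (fun n => (hφ n).continuous)
    hKC.continuous hFunif hKIE hψ (x := x) (y := y)
  have hβ := (hc l).ne'
  have hval := smul_transform_eq_at_endpoint (fun n => (hφ n).continuous) hψ hseries hS
    (fun n hn => horth n l hn) Real.pi_pos.le
  have hder := smul_deriv_transform_eq_at_endpoint hφ hKC hψ hseries hS'
    (fun n hn => horth n l hn) Real.pi_pos
  refine ⟨(inv_smul_eq_iff₀ hβ).mpr hval.symm |>.symm, ?_⟩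
  refine (smul_eq_zero.mp ?_).resolve_left hβ
  rw [smul_add, ← mulVec_smul, ← mulVec_smul, hder, hval, sub_mulVec, ← mulVec_mulVec,
    mulVec_add, ← hφbcπ l]
  abel

/-- For a C¹ solution `K` of the integral equation, with
`ψ n x := φ n x + ∫₀ˣ K(x,t)·φ n t dt`, assuming the series `∑ n, c n • ψ n x ⬝ (φ n t)ᵀ`
converges uniformly together with its term-by-term derivative in `x`, one has, for every `l`:
(i) `ψ l π = φ l π / (1 + c l ‖φ l‖²)`; (ii) `ℬ·(ψ l)'(π) + 𝒜'·ψ l π = 0` where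
`𝒜' := 𝒜 - ℬ·K(π,π)` (the matrix `𝒜̃` of the paper). -/
theorem boundary_condition_at_pi
    (N : ℕ) (hN : 1 ≤ N)
    (P : ℝ → Matrix (Fin N) (Fin N) ℝ) (A B 𝒜 ℬ : Matrix (Fin N) (Fin N) ℝ)
    (hP : ContinuousOn P (Set.Icc 0 Real.pi))
    (hPsymm : ∀ x ∈ Set.Icc (0:ℝ) Real.pi, (P x)ᵀ = P x)
    (hAB : B * Aᵀ = A * Bᵀ) (hAB' : ℬ * 𝒜ᵀ = 𝒜 * ℬᵀ)
    (hrkAB : (Matrix.fromCols A B).rank = N)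
    (hrkAB' : (Matrix.fromCols 𝒜 ℬ).rank = N)
    -- `(φ n)` is an L²-orthogonal, complete system of eigenfunctions with eigenvalues `ev n`
    (φ : ℕ → ℝ → (Fin N → ℝ)) (ev : ℕ → ℝ) (c : ℕ → ℝ)
    (hφC : ∀ n, ContDiff ℝ 2 (φ n))
    (hφne : ∀ n, ∃ x ∈ Set.Icc (0:ℝ) Real.pi, φ n x ≠ 0)
    (hφeq : ∀ n, ∀ x ∈ Set.Icc (0:ℝ) Real.pi,
      -(deriv (deriv (φ n)) x) + P x *ᵥ φ n x = ev n • φ n x)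
    (hφbc0 : ∀ n, B *ᵥ deriv (φ n) 0 + A *ᵥ φ n 0 = 0)
    (hφbcπ : ∀ n, ℬ *ᵥ deriv (φ n) Real.pi + 𝒜 *ᵥ φ n Real.pi = 0)
    (horth : ∀ m n : ℕ, m ≠ n → ∫ x in (0:ℝ)..Real.pi, φ m x ⬝ᵥ φ n x = 0)
    (htotal : ∀ f : ℝ → Fin N → ℝ, ContinuousOn f (Set.Icc 0 Real.pi) →
      (∀ n, ∫ x in (0:ℝ)..Real.pi, f x ⬝ᵥ φ n x = 0) →
      ∀ x ∈ Set.Icc (0:ℝ) Real.pi, f x = 0)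
    (hc : ∀ n, 0 < 1 + c n * ∫ x in (0:ℝ)..Real.pi, φ n x ⬝ᵥ φ n x)
    -- `F(x,y) = ∑ n, c n • φ n x ⬝ (φ n y)ᵀ`, converging uniformly, with `F` of class C²
    (F : ℝ → ℝ → Matrix (Fin N) (Fin N) ℝ)
    (hFsum : ∀ x ∈ Set.Icc (0:ℝ) Real.pi, ∀ y ∈ Set.Icc (0:ℝ) Real.pi,
      HasSum (fun n => c n • Matrix.vecMulVec (φ n x) (φ n y)) (F x y))
    (hFunif : TendstoUniformlyOn
      (fun (s : Finset ℕ) (p : ℝ × ℝ) => ∑ n ∈ s, c n • Matrix.vecMulVec (φ n p.1) (φ n p.2))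
      (fun p => F p.1 p.2) Filter.atTop (Set.Icc 0 Real.pi ×ˢ Set.Icc 0 Real.pi))
    (hFC : ContDiff ℝ 2 (Function.uncurry F))
    -- `K` is a C¹ solution of the integral equation on the triangle
    (K : ℝ → ℝ → Matrix (Fin N) (Fin N) ℝ)
    (hKC : ContDiff ℝ 1 (Function.uncurry K))
    (hKIE : ∀ x y : ℝ, 0 ≤ y → y ≤ x → x ≤ Real.pi →
      K x y + F x y + (∫ t in (0:ℝ)..x, K x t * F t y) = 0)
    (ψ : ℕ → ℝ → (Fin N → ℝ))
    (hψ : ∀ n x, ψ n x = φ n x + ∫ t in (0:ℝ)..x, K x t *ᵥ φ n t)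
    -- uniform convergence of `∑ n, c n • ψ n x ⬝ (φ n t)ᵀ` and its term-by-term
    -- derivative in `x`
    (S S' : ℝ × ℝ → Matrix (Fin N) (Fin N) ℝ)
    (hS : TendstoUniformlyOn
      (fun (s : Finset ℕ) (p : ℝ × ℝ) => ∑ n ∈ s, c n • Matrix.vecMulVec (ψ n p.1) (φ n p.2))
      S Filter.atTop (Set.Icc 0 Real.pi ×ˢ Set.Icc 0 Real.pi))
    (hS' : TendstoUniformlyOn
      (fun (s : Finset ℕ) (p : ℝ × ℝ) =>
        ∑ n ∈ s, c n • Matrix.vecMulVec (deriv (ψ n) p.1) (φ n p.2))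
      S' Filter.atTop (Set.Icc 0 Real.pi ×ˢ Set.Icc 0 Real.pi)) :
    ∀ l : ℕ,
      ψ l Real.pi
        = (1 + c l * ∫ t in (0:ℝ)..Real.pi, φ l t ⬝ᵥ φ l t)⁻¹ • φ l Real.pi ∧
      ℬ *ᵥ deriv (ψ l) Real.pi
        + (𝒜 - ℬ * K Real.pi Real.pi) *ᵥ ψ l Real.pi = 0 :=
  boundary_condition_at_pi_general N 𝒜 ℬ φ c hφC hφbcπ horth hc F hFunif K hKC hKIE ψ hψ S S' hS hS'
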